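/- Recursion extracting one variable: if I = (i_1,...,i_n) is nonempty and I' = (i_2,...,i_n), then :y^I: = y_{i_1}·:y^{I'}: − Σ_{U⊆I'} κ[y_{(i_1)+U}]·:y^{I'∖U}:, where (i_1)+U denotes the sequence obtained by prepending i_1 to U. -/

import Mathlib

open MeasureTheory Finset

/-- The moment `E[y^A]` of the labeled family `(y i)_{i ∈ A}`. -/
noncomputable def mom {Ω : Type*} [MeasurableSpace Ω] {ι : Type*}
    (μ : Measure Ω) (y : ι → Ω → ℝ) (A : Finset ι) : ℝ :=
  ∫ ω, ∏ i ∈ A, y i ω ∂μ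

open scoped Classical in
/-- Set partitions of a finite (label) set `A`: finsets of nonempty pairwise
disjoint blocks whose union is `A`. -/
noncomputable def partitionsOf {ι : Type*} (A : Finset ι) : Finset (Finset (Finset ι)) :=
  A.powerset.powerset.filter fun π =>
    (∀ B ∈ π, B.Nonempty) ∧ (∀ B ∈ π, ∀ C ∈ π, B ≠ C → Disjoint B C) ∧ π.sup id = A

/-- The joint cumulant `κ[y_A]`, defined by the (Möbius-inverted form of the)
moments-to-cumulants recursion. -/
noncomputable def cum {Ω : Type*} [MeasurableSpace Ω] {ι : Type*}
    (μ : Measure Ω) (y : ι → Ω → ℝ) (A : Finset ι) : ℝ :=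
  ∑ π ∈ partitionsOf A,
    (-1 : ℝ) ^ (π.card - 1) * (Nat.factorial (π.card - 1)) * ∏ B ∈ π, mom μ y B

/-- The Wick polynomial `:y^I:` defined by the recursion
`:y^I: = y^I − Σ_{∅≠E⊆I} E[y^E]·:y^{I∖E}:`, with `:y^∅: = 1`. -/
noncomputable def wick {Ω : Type*} [MeasurableSpace Ω] {ι : Type*} [DecidableEq ι]
    (μ : Measure Ω) (y : ι → Ω → ℝ) (I : Finset ι) : Ω → ℝ :=
  fun ω => (∏ i ∈ I, y i ω) -
    ∑ E ∈ (I.powerset.filter fun E => E ≠ ∅).attach,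
      mom μ y E.1 * wick μ y (I \ E.1) ω
termination_by I.card
decreasing_by
  have h := E.2
  simp only [Finset.mem_filter, Finset.mem_powerset] at h
  exact Finset.card_lt_card (Finset.sdiff_ssubset h.1 (Finset.nonempty_iff_ne_empty.mpr h.2))

/-!
Write `I = x + S`. Pairing with the moments, `f ↦ ∑_{E ⊆ S} E[y^E] f(S ∖ E)`, sends both
`f(T) = :y^{x+T}:` and `f(T) = y_x :y^T: − ∑_{U ⊆ T} κ[y_{x+U}] :y^{T∖U}:` to
`y^{x+S} − ∑_{F ⊆ S} E[y^{x+F}] :y^{S∖F}:`: the first by the defining recursion, the second by the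
moment–cumulant recursion `E[y^{x+F}] = ∑_{E ⊆ F} E[y^E] κ[y_{x+(F∖E)}]`. As `E[y^∅] = 1` and, by
strong induction on `S`, the two functions agree on every `S ∖ E` with `E ≠ ∅`, they agree on `S`.

The recursion comes from the Möbius formula for `κ`: a nonempty `R ⊆ F` together with a partition
of `(x + F) ∖ R` is a partition of `x + F` with a marked block not containing `x`. A partition with
`k + 1` blocks has `k` such blocks, and `c(k + 1) + k c(k) = 0` for `k ≥ 1`, where
`c(k) = (-1)^(k-1) (k-1)!`, so only the one-block partition survives.
-/

theorem sum_powerset_sum_powerset_sdiff {ι M : Type*} [DecidableEq ι] [AddCommMonoid M]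
    (S : Finset ι) (g : Finset ι → Finset ι → M) :
    ∑ E ∈ S.powerset, ∑ U ∈ (S \ E).powerset, g E U =
      ∑ F ∈ S.powerset, ∑ E ∈ F.powerset, g E (F \ E) := by
  rw [sum_sigma', sum_sigma']
  refine sum_nbij' (fun p => ⟨p.1 ∪ p.2, p.1⟩) (fun q => ⟨q.2, q.1 \ q.2⟩) ?_ ?_ ?_ ?_ ?_
  · rintro ⟨E, U⟩ h
    simp only [mem_sigma, mem_powerset, subset_sdiff] at h ⊢
    exact ⟨union_subset h.1 h.2.1, subset_union_left⟩
  · rintro ⟨F, E⟩ h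
    simp only [mem_sigma, mem_powerset] at h ⊢
    exact ⟨h.2.trans h.1, sdiff_subset_sdiff h.1 subset_rfl⟩
  · rintro ⟨E, U⟩ h
    simp only [mem_sigma, mem_powerset, subset_sdiff] at h
    simp [union_sdiff_cancel_left h.2.2.symm]
  · rintro ⟨F, E⟩ h
    simp only [mem_sigma, mem_powerset] at h
    simp [union_sdiff_of_subset h.2]
  · rintro ⟨E, U⟩ h
    simp only [mem_sigma, mem_powerset, subset_sdiff] at h
    simp [union_sdiff_cancel_left h.2.2.symm]

section Partitions

variable {ι : Type*} {A R : Finset ι} {π τ : Finset (Finset ι)}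

theorem mem_partitionsOf : π ∈ partitionsOf A ↔ (∀ B ∈ π, B.Nonempty) ∧
    (∀ B ∈ π, ∀ C ∈ π, B ≠ C → Disjoint B C) ∧ ∀ a, a ∈ A ↔ ∃ B ∈ π, a ∈ B := by
  classical
  simp only [partitionsOf, mem_filter, mem_powerset, Finset.ext_iff (s₁ := π.sup id), mem_sup,
    id]
  constructor
  · exact fun ⟨_, hne, hdisj, hcov⟩ => ⟨hne, hdisj, fun a => (hcov a).symm⟩
  · exact fun ⟨hne, hdisj, hcov⟩ =>
      ⟨fun B hB => mem_powerset.2 fun a ha => (hcov a).2 ⟨B, hB, ha⟩, hne, hdisj,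
        fun a => (hcov a).symm⟩

theorem subset_of_mem_partitionsOf (hτ : τ ∈ partitionsOf A) {B : Finset ι} (hB : B ∈ τ) :
    B ⊆ A :=
  fun a ha => ((mem_partitionsOf.1 hτ).2.2 a).2 ⟨B, hB, ha⟩

theorem notMem_of_mem_partitionsOf_sdiff [DecidableEq ι] (hR : R.Nonempty)
    (hπ : π ∈ partitionsOf (A \ R)) : R ∉ π := fun h =>
  hR.ne_empty <| (disjoint_self_iff_empty R).1 (subset_sdiff.1 (subset_of_mem_partitionsOf hπ h)).2

theorem insert_mem_partitionsOf [DecidableEq ι] (hRA : R ⊆ A) (hR : R.Nonempty)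
    (hπ : π ∈ partitionsOf (A \ R)) : insert R π ∈ partitionsOf A := by
  obtain ⟨hne, hdisj, hcov⟩ := mem_partitionsOf.1 hπ
  have hdisjR (B : Finset ι) (hB : B ∈ π) : Disjoint R B :=
    (subset_sdiff.1 (subset_of_mem_partitionsOf hπ hB)).2.symm
  refine mem_partitionsOf.2 ⟨forall_mem_insert _ _ _ |>.2 ⟨hR, hne⟩, ?_, fun a => ?_⟩
  · intro B hB C hC hBC
    rcases mem_insert.1 hB with rfl | hB' <;> rcases mem_insert.1 hC with rfl | hC'
    exacts [absurd rfl hBC, hdisjR C hC', (hdisjR B hB').symm, hdisj B hB' C hC' hBC]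
  · have := hcov a
    simp only [mem_sdiff, exists_mem_insert] at this ⊢
    by_cases haR : a ∈ R
    · simp [haR, hRA haR]
    · simp [haR, ← this]

theorem erase_mem_partitionsOf [DecidableEq ι] (hτ : τ ∈ partitionsOf A) (hR : R ∈ τ) :
    τ.erase R ∈ partitionsOf (A \ R) := by
  obtain ⟨hne, hdisj, hcov⟩ := mem_partitionsOf.1 hτ
  refine mem_partitionsOf.2 ⟨fun B hB => hne B (mem_of_mem_erase hB),
    fun B hB C hC => hdisj B (mem_of_mem_erase hB) C (mem_of_mem_erase hC), fun a => ?_⟩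
  simp only [mem_sdiff, hcov a, mem_erase]
  constructor
  · rintro ⟨⟨B, hB, haB⟩, haR⟩
    exact ⟨B, ⟨fun h => haR (h ▸ haB), hB⟩, haB⟩
  · rintro ⟨B, ⟨hBR, hB⟩, haB⟩
    exact ⟨⟨B, hB, haB⟩, disjoint_left.1 (hdisj B hB R hR hBR) haB⟩

theorem card_filter_mem_of_mem_partitionsOf [DecidableEq ι] (hτ : τ ∈ partitionsOf A) {a : ι}
    (ha : a ∈ A) : #{B ∈ τ | a ∈ B} = 1 := by
  obtain ⟨-, hdisj, hcov⟩ := mem_partitionsOf.1 hτ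
  obtain ⟨B, hB, haB⟩ := (hcov a).1 ha
  refine card_eq_one.2 ⟨B, eq_singleton_iff_unique_mem.2 ⟨mem_filter.2 ⟨hB, haB⟩, ?_⟩⟩
  intro C hC
  by_contra hCB
  exact disjoint_left.1 (hdisj C (mem_filter.1 hC).1 B hB hCB) (mem_filter.1 hC).2 haB

theorem singleton_mem_partitionsOf (hA : A.Nonempty) : {A} ∈ partitionsOf A :=
  mem_partitionsOf.2 ⟨by simpa using hA, by simp, by simp⟩

theorem eq_singleton_of_mem_partitionsOf (hτ : τ ∈ partitionsOf A) (h : #τ = 1) : τ = {A} := by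
  obtain ⟨B, rfl⟩ := card_eq_one.1 h
  have hcov := (mem_partitionsOf.1 hτ).2.2
  simp only [mem_singleton, exists_eq_left] at hcov
  rw [Finset.ext hcov]

theorem card_filter_subset_of_mem_partitionsOf_insert [DecidableEq ι] {x : ι} {F : Finset ι}
    (hx : x ∉ F) (hτ : τ ∈ partitionsOf (insert x F)) : #{R ∈ τ | R ⊆ F} = #τ - 1 := by
  have hfilter : {R ∈ τ | R ⊆ F} = {R ∈ τ | x ∉ R} := filter_congr fun R hR =>
    ⟨fun h hxR => hx (h hxR),
      fun h => (subset_insert_iff_of_notMem h).1 (subset_of_mem_partitionsOf hτ hR)⟩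
  have hsplit := card_filter_add_card_filter_not (s := τ) (fun R => x ∈ R)
  rw [card_filter_mem_of_mem_partitionsOf hτ (mem_insert_self x F)] at hsplit
  rw [hfilter]
  omega

theorem sum_sum_partitionsOf_sdiff [DecidableEq ι] {M : Type*} [AddCommMonoid M] {S : Finset ι}
    (hSA : S ⊆ A) (f : Finset (Finset ι) → Finset ι → M) :
    ∑ R ∈ S.powerset with R.Nonempty, ∑ π ∈ partitionsOf (A \ R), f π R =
      ∑ τ ∈ partitionsOf A, ∑ R ∈ τ with R ⊆ S, f (τ.erase R) R := by
  rw [sum_sigma', sum_sigma']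
  refine sum_nbij' (fun p => ⟨insert p.1 p.2, p.1⟩) (fun q => ⟨q.2, q.1.erase q.2⟩)
    ?_ ?_ ?_ ?_ ?_
  · rintro ⟨R, π⟩ h
    simp only [mem_sigma, mem_filter, mem_powerset] at h ⊢
    exact ⟨insert_mem_partitionsOf (h.1.1.trans hSA) h.1.2 h.2, mem_insert_self _ _, h.1.1⟩
  · rintro ⟨τ, R⟩ h
    simp only [mem_sigma, mem_filter, mem_powerset] at h ⊢
    exact ⟨⟨h.2.2, (mem_partitionsOf.1 h.1).1 R h.2.1⟩, erase_mem_partitionsOf h.1 h.2.1⟩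
  · rintro ⟨R, π⟩ h
    simp only [mem_sigma, mem_filter, mem_powerset] at h
    simp [erase_insert (notMem_of_mem_partitionsOf_sdiff h.1.2 h.2)]
  · rintro ⟨τ, R⟩ h
    simp only [mem_sigma, mem_filter] at h
    simp [insert_erase h.2.1]
  · rintro ⟨R, π⟩ h
    simp only [mem_sigma, mem_filter, mem_powerset] at h
    simp [erase_insert (notMem_of_mem_partitionsOf_sdiff h.1.2 h.2)]

end Partitions

section Cumulants

variable {ι : Type*} {A : Finset ι}

/-- The Möbius coefficient `μ(π, 1̂) = (-1)^(k-1) (k-1)!` of a partition with `k` blocks. -/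
def cumCoeff (k : ℕ) : ℝ :=
  (-1) ^ (k - 1) * (k - 1).factorial

noncomputable def cumulantOf (g : Finset ι → ℝ) (A : Finset ι) : ℝ :=
  ∑ π ∈ partitionsOf A, cumCoeff #π * ∏ B ∈ π, g B

theorem cum_eq_cumulantOf {Ω : Type*} [MeasurableSpace Ω] (μ : Measure Ω) (y : ι → Ω → ℝ) :
    cum μ y = cumulantOf (mom μ y) :=
  rfl

theorem cumCoeff_succ_add_mul (k : ℕ) :
    cumCoeff (k + 1) + k * cumCoeff k = if k = 0 then 1 else 0 := by
  rcases k with _ | k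
  · simp [cumCoeff]
  · simp only [cumCoeff, Nat.add_sub_cancel, Nat.factorial_succ, pow_succ]
    push_cast
    ring

theorem sum_partitionsOf_cumCoeff_add (hA : A.Nonempty) (g : Finset ι → ℝ) :
    ∑ τ ∈ partitionsOf A, (cumCoeff #τ + (#τ - 1 : ℕ) * cumCoeff (#τ - 1)) * ∏ B ∈ τ, g B =
      g A := by
  rw [sum_eq_single_of_mem {A} (singleton_mem_partitionsOf hA)]
  · simp [cumCoeff]
  intro τ hτ hτA
  obtain ⟨a, ha⟩ := hA
  obtain ⟨B, hB, -⟩ := ((mem_partitionsOf.1 hτ).2.2 a).1 ha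
  obtain ⟨k, hk⟩ := Nat.exists_eq_add_of_lt (card_pos.2 ⟨B, hB⟩)
  have hk0 : k ≠ 0 := fun h => hτA (eq_singleton_of_mem_partitionsOf hτ (by omega))
  rw [hk, zero_add, Nat.add_sub_cancel, cumCoeff_succ_add_mul, if_neg hk0, zero_mul]

theorem sum_filter_subset_cumCoeff_mul [DecidableEq ι] {x : ι} {F : Finset ι} (hx : x ∉ F)
    {τ : Finset (Finset ι)} (hτ : τ ∈ partitionsOf (insert x F)) (g : Finset ι → ℝ) :
    ∑ R ∈ τ with R ⊆ F, cumCoeff #(τ.erase R) * (∏ B ∈ τ.erase R, g B) * g R =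
      (#τ - 1 : ℕ) * cumCoeff (#τ - 1) * ∏ B ∈ τ, g B := by
  have hterm : ∀ R ∈ {R ∈ τ | R ⊆ F},
      cumCoeff #(τ.erase R) * (∏ B ∈ τ.erase R, g B) * g R = cumCoeff (#τ - 1) * ∏ B ∈ τ, g B :=
    fun R hR => by
      rw [card_erase_of_mem (mem_filter.1 hR).1, mul_assoc, prod_erase_mul _ _ (mem_filter.1 hR).1]
  rw [sum_congr rfl hterm, sum_const, card_filter_subset_of_mem_partitionsOf_insert hx hτ,
    nsmul_eq_mul, mul_assoc]

theorem sum_powerset_mul_cumulantOf_insert [DecidableEq ι] {g : Finset ι → ℝ} (hg : g ∅ = 1)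
    {x : ι} {F : Finset ι} (hx : x ∉ F) :
    ∑ E ∈ F.powerset, g E * cumulantOf g (insert x (F \ E)) = g (insert x F) := by
  calc ∑ E ∈ F.powerset, g E * cumulantOf g (insert x (F \ E))
      = cumulantOf g (insert x F) + ∑ R ∈ F.powerset with R.Nonempty,
          ∑ π ∈ partitionsOf (insert x F \ R), cumCoeff #π * (∏ B ∈ π, g B) * g R := by
        rw [← add_sum_erase _ _ (empty_mem_powerset F), hg, one_mul, sdiff_empty, ← filter_ne']
        refine congrArg _ (sum_congr (filter_congr fun R _ => nonempty_iff_ne_empty.symm) ?_)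
        intro R hR
        have hxR : x ∉ R := fun h => hx (mem_powerset.1 (mem_filter.1 hR).1 h)
        rw [insert_sdiff_of_notMem _ hxR, cumulantOf, mul_comm, sum_mul]
    _ = cumulantOf g (insert x F) + ∑ τ ∈ partitionsOf (insert x F),
          (#τ - 1 : ℕ) * cumCoeff (#τ - 1) * ∏ B ∈ τ, g B := by
        rw [sum_sum_partitionsOf_sdiff (subset_insert x F)]
        exact congrArg _ (sum_congr rfl fun τ hτ => sum_filter_subset_cumCoeff_mul hx hτ g)
    _ = g (insert x F) := by
        rw [cumulantOf, ← sum_add_distrib, ← sum_partitionsOf_cumCoeff_add (insert_nonempty x F) g]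
        exact sum_congr rfl fun τ _ => by ring

end Cumulants

theorem mom_empty {Ω : Type*} [MeasurableSpace Ω] {ι : Type*} (μ : Measure Ω)
    [IsProbabilityMeasure μ] (y : ι → Ω → ℝ) : mom μ y ∅ = 1 := by
  simp [mom]

section Wick

variable {Ω : Type*} [MeasurableSpace Ω] {ι : Type*} [DecidableEq ι] (μ : Measure Ω)
  (y : ι → Ω → ℝ)

theorem wick_eq_prod_sub (I : Finset ι) (ω : Ω) :
    wick μ y I ω = ∏ i ∈ I, y i ω -
      ∑ E ∈ I.powerset with E ≠ ∅, mom μ y E * wick μ y (I \ E) ω := by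
  rw [wick, sum_attach _ fun E => mom μ y E * wick μ y (I \ E) ω]

theorem sum_powerset_mom_mul_wick [IsProbabilityMeasure μ] (I : Finset ι) (ω : Ω) :
    ∑ E ∈ I.powerset, mom μ y E * wick μ y (I \ E) ω = ∏ i ∈ I, y i ω := by
  rw [← add_sum_erase _ _ (empty_mem_powerset I), mom_empty, one_mul, sdiff_empty,
    wick_eq_prod_sub, filter_ne']
  ring

theorem sum_powerset_mom_mul_wick_insert_sdiff [IsProbabilityMeasure μ] {x : ι} {S : Finset ι}
    (hx : x ∉ S) (ω : Ω) :
    ∑ E ∈ S.powerset, mom μ y E * wick μ y (insert x (S \ E)) ω =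
      ∏ i ∈ insert x S, y i ω - ∑ F ∈ S.powerset, mom μ y (insert x F) * wick μ y (S \ F) ω := by
  rw [eq_sub_iff_add_eq, ← sum_powerset_mom_mul_wick μ y (insert x S), sum_powerset_insert hx]
  congr 1
  · refine sum_congr rfl fun E hE => ?_
    rw [insert_sdiff_of_notMem _ fun h => hx (mem_powerset.1 hE h)]
  · simp only [insert_sdiff_insert, sdiff_insert_of_notMem hx]

theorem sum_powerset_mom_mul_extract [IsProbabilityMeasure μ] {x : ι} {S : Finset ι}
    (hx : x ∉ S) (ω : Ω) :
    ∑ E ∈ S.powerset, mom μ y E * (y x ω * wick μ y (S \ E) ω -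
        ∑ U ∈ (S \ E).powerset, cum μ y (insert x U) * wick μ y ((S \ E) \ U) ω) =
      ∏ i ∈ insert x S, y i ω - ∑ F ∈ S.powerset, mom μ y (insert x F) * wick μ y (S \ F) ω := by
  have hcum : ∑ E ∈ S.powerset, ∑ U ∈ (S \ E).powerset,
        mom μ y E * (cum μ y (insert x U) * wick μ y ((S \ E) \ U) ω) =
      ∑ F ∈ S.powerset, mom μ y (insert x F) * wick μ y (S \ F) ω := by
    simp_rw [sdiff_sdiff_left]
    rw [sum_powerset_sum_powerset_sdiff]
    refine sum_congr rfl fun F hF => ?_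
    have hxF : x ∉ F := fun h => hx (mem_powerset.1 hF h)
    rw [← sum_powerset_mul_cumulantOf_insert (mom_empty μ y) hxF, sum_mul]
    refine sum_congr rfl fun E hE => ?_
    rw [sup_eq_union, union_sdiff_of_subset (mem_powerset.1 hE), cum_eq_cumulantOf, mul_assoc]
  simp_rw [mul_sub, sum_sub_distrib, mul_left_comm _ (y x ω), ← mul_sum,
    sum_powerset_mom_mul_wick, mul_sum, hcum, prod_insert hx]

theorem wick_insert [IsProbabilityMeasure μ] {x : ι} {S : Finset ι} (hx : x ∉ S) (ω : Ω) :
    wick μ y (insert x S) ω =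
      y x ω * wick μ y S ω - ∑ U ∈ S.powerset, cum μ y (insert x U) * wick μ y (S \ U) ω := by
  induction S using Finset.strongInduction with
  | H S ih =>
    have h := (sum_powerset_mom_mul_wick_insert_sdiff μ y hx ω).trans
      (sum_powerset_mom_mul_extract μ y hx ω).symm
    rw [← sub_eq_zero, ← sum_sub_distrib] at h
    simp_rw [← mul_sub] at h
    rwa [sum_eq_single_of_mem ∅ (empty_mem_powerset S), mom_empty, one_mul, sdiff_empty,
      sub_eq_zero] at h
    intro E hE hE0
    rw [ih (S \ E) (sdiff_ssubset (mem_powerset.1 hE) (nonempty_iff_ne_empty.2 hE0))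
      fun h => hx (sdiff_subset h), sub_self, mul_zero]

end Wick

theorem wick_extract_one_general {Ω : Type*} [MeasurableSpace Ω] {ι : Type*} [DecidableEq ι]
    (μ : Measure Ω) [IsProbabilityMeasure μ] (y : ι → Ω → ℝ)
    (I : Finset ι) (x : ι) (hx : x ∈ I) :
    ∀ ω, wick μ y I ω =
      y x ω * wick μ y (I.erase x) ω -
        ∑ U ∈ (I.erase x).powerset, cum μ y (insert x U) * wick μ y ((I.erase x) \ U) ω := by
  intro ω
  simpa only [insert_erase hx] using wick_insert μ y (notMem_erase x I) ω

/-- recursion extracting one variable from a Wick polynomial. -/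
theorem wick_extract_one {Ω : Type*} [MeasurableSpace Ω] {ι : Type*} [DecidableEq ι]
    (μ : Measure Ω) [IsProbabilityMeasure μ] (y : ι → Ω → ℝ)
    (I : Finset ι) (x : ι) (hx : x ∈ I)
    (hint : ∀ A ⊆ I, Integrable (fun ω => ∏ i ∈ A, y i ω) μ) :
    ∀ ω, wick μ y I ω =
      y x ω * wick μ y (I.erase x) ω -
        ∑ U ∈ (I.erase x).powerset, cum μ y (insert x U) * wick μ y ((I.erase x) \ U) ω :=
  wick_extract_one_general μ y I x hx
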